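/- Let X be compact, Y Hausdorff, D ⊆ X nonempty, ∂D := D̄ \ D, and f : D̄ → Y continuous with f(D) open. Suppose E, F ⊆ Y with E and F connected, Y \ f(∂D) = E ∪ F, F ⊄ f(D), and f(∂D) ⊆ closure(F). Then f(D) = E, E and F are nonempty and disjoint, and f takes no value on D that it takes on ∂D. -/

import Mathlib

/-!
Off the boundary image `f(∂D)`, the space `Y` is split by two disjoint open sets: `f(D)` and the
complement of the compact (hence closed) set `f(D̄) = f(D) ∪ f(∂D)`. So each connected set missing
`f(∂D)` lies in one of them. For `F` it cannot be `f(D)`, so `F` misses `f(D̄) ⊇ f(D)`; as `f(D)`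
is open it then misses `closure F ⊇ f(∂D)`, whence `f(D) ⊆ E`. Finally `E` meets `f(D) ≠ ∅`, so
`E ⊆ f(D)`.
-/

open Set

section FillingPrinciple

variable {X Y : Type*} [TopologicalSpace X] {f : X → Y} {D : Set X}

theorem image_closure_eq_image_union_image_closure_diff :
    f '' closure D = f '' D ∪ f '' (closure D \ D) := by
  rw [← image_union, union_sdiff_cancel subset_closure]

variable [TopologicalSpace Y]

theorem isClosed_image_closure [CompactSpace X] [T2Space Y] (hf : ContinuousOn f (closure D)) :
    IsClosed (f '' closure D) :=
  (isClosed_closure.isCompact.image_of_continuousOn hf).isClosed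

theorem IsPreconnected.subset_image_or_subset_compl_image_closure [CompactSpace X] [T2Space Y]
    (hf : ContinuousOn f (closure D)) (hopen : IsOpen (f '' D)) {S : Set Y}
    (hS : IsPreconnected S) (hSB : Disjoint S (f '' (closure D \ D))) :
    S ⊆ f '' D ∨ S ⊆ (f '' closure D)ᶜ := by
  refine hS.subset_or_subset hopen (isClosed_image_closure hf).isOpen_compl
    (disjoint_compl_right_iff_subset.mpr (image_mono subset_closure)) fun y hy => ?_
  by_cases hyK : y ∈ f '' closure D
  · rw [image_closure_eq_image_union_image_closure_diff] at hyK
    exact Or.inl (hyK.resolve_right (hSB.notMem_of_mem_left hy))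
  · exact Or.inr hyK

end FillingPrinciple

/-- QJFP part (III). -/
theorem qjfp_III {X Y : Type*} [TopologicalSpace X] [CompactSpace X]
    [TopologicalSpace Y] [T2Space Y] (D : Set X) (hD : D.Nonempty) (f : X → Y)
    (hf : ContinuousOn f (closure D)) (hopen : IsOpen (f '' D))
    (E F : Set Y) (hE : IsConnected E) (hF : IsConnected F)
    (hcover : (f '' (closure D \ D))ᶜ = E ∪ F)
    (hFnsub : ¬ F ⊆ f '' D)
    (hFcl : f '' (closure D \ D) ⊆ closure F) :
    f '' D = E ∧ E.Nonempty ∧ F.Nonempty ∧ E ∩ F = ∅ ∧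
      f '' D ∩ f '' (closure D \ D) = ∅ := by
  have hEB : Disjoint E (f '' (closure D \ D)) :=
    subset_compl_iff_disjoint_right.mp (hcover ▸ subset_union_left)
  have hFB : Disjoint F (f '' (closure D \ D)) :=
    subset_compl_iff_disjoint_right.mp (hcover ▸ subset_union_right)
  have hUK : f '' D ⊆ f '' closure D := image_mono subset_closure
  have hFK : F ⊆ (f '' closure D)ᶜ :=
    (hF.isPreconnected.subset_image_or_subset_compl_image_closure hf hopen hFB).resolve_left hFnsub
  have hFU : Disjoint F (f '' D) := (disjoint_compl_left_iff_subset.mpr hUK).mono_left hFK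
  have hUB : Disjoint (f '' D) (f '' (closure D \ D)) :=
    (hFU.symm.closure_right hopen).mono_right hFcl
  have hUE : f '' D ⊆ E := fun y hy =>
    (hcover ▸ hUB.subset_compl_right hy : y ∈ E ∪ F).resolve_right (hFU.notMem_of_mem_right hy)
  obtain ⟨y, hy⟩ := hD.image f
  have hEU : E ⊆ f '' D :=
    (hE.isPreconnected.subset_image_or_subset_compl_image_closure hf hopen hEB).resolve_right
      fun hEK => hEK (hUE hy) (hUK hy)
  have hUeqE : f '' D = E := hUE.antisymm hEU
  exact ⟨hUeqE, ⟨y, hUE hy⟩, hF.nonempty,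
    disjoint_iff_inter_eq_empty.mp (hUeqE ▸ hFU.symm), disjoint_iff_inter_eq_empty.mp hUB⟩
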